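/- arXiv:1012.2779 — 4 statements merged into one kernel-verified Lean document; each statement's English description precedes it below -/
import Mathlib

section
/- Let a > 0 and let p : ℝ³ → ℝ be integrable with support contained in the closed ball B̄_a = {x ∈ ℝ³ : |x| ≤ a}, and suppose p is not equal to zero almost everywhere. Then for every fixed κ ≥ 0, limsup_{η→+∞} sup_{β ∈ S²} |p̃((κ+iη)β)| = +∞. -/
open MeasureTheory Complex Filter
open scoped ENNReal NNReal

noncomputable def ptilde (p : EuclideanSpace ℝ (Fin 3) → ℝ)
    (β : EuclideanSpace ℝ (Fin 3)) (z : ℂ) : ℂ :=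
  ∫ x : EuclideanSpace ℝ (Fin 3), (p x : ℂ) * Complex.exp (Complex.I * z * ((inner ℝ β x : ℝ) : ℂ))

/-!
Let `F_β(z) = ∫ p(x) e^{i z ⟪β, x⟫} dx`. As `p` is supported in the ball of radius `a`, each `F_β`
with `‖β‖ = 1` is entire and `|F_β(z)| ≤ ‖p‖₁ e^{a |Im z|}`. If the limsup were finite, all `F_β`
would be bounded by a common constant on the vertical ray `{κ + iη : η ≥ η₀}`. Together with the
bound `‖p‖₁ e^{a η₀}` on the real axis and on the segment `[κ, κ + iη₀]`, Phragmén–Lindelöf in the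
two quadrants with corner `κ` bounds `F_β` on the upper half-plane, and `F_{-β}(z) = F_β(-z)`
transfers the bound to the lower one. By Liouville each `F_β` is constant, and by Riemann–Lebesgue
along the real axis it is zero. So the Fourier transform of `p` vanishes, and `p = 0` a.e.
-/

open Metric Bornology Set Function
open scoped Real FourierTransform RealInnerProductSpace Topology SchwartzMap

lemma Differentiable.eq_zero_of_isBounded_of_tendsto_atTop {g : ℂ → ℂ} (hg : Differentiable ℂ g)
    (hb : IsBounded (range g)) (hlim : Tendsto (fun t : ℝ => g t) atTop (𝓝 0)) : g = 0 := by
  have hconst : ∀ z, g z = g 0 := fun z => hg.apply_eq_apply_of_bounded hb z 0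
  have h0 : g 0 = 0 :=
    tendsto_nhds_unique (tendsto_const_nhds.congr fun t : ℝ => (hconst t).symm) hlim
  exact funext fun z => (hconst z).trans h0

lemma PhragmenLindelof.upper_half_plane_of_bounded_on_vertical_ray {g : ℂ → ℂ}
    (hg : Differentiable ℂ g) {M a : ℝ} (ha : 0 ≤ a)
    (hgrowth : ∀ z, ‖g z‖ ≤ M * Real.exp (a * |z.im|))
    {κ η₀ C : ℝ} (hray : ∀ η, η₀ ≤ η → ‖g (κ + η * I)‖ ≤ C) {z : ℂ} (hz : 0 ≤ z.im) :
    ‖g z‖ ≤ max C (M * Real.exp (a * max η₀ 0)) := by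
  -- after the shift by `κ`, the ray becomes the common edge of the first two quadrants
  set G : ℂ → ℂ := fun w => g (w + κ)
  have hd : Differentiable ℂ G := hg.comp (differentiable_id.add_const _)
  have hM : 0 ≤ M := by simpa using (norm_nonneg _).trans (hgrowth 0)
  have hgrowth' : ∀ S : Set ℂ, ∃ c < (2 : ℝ), ∃ B,
      G =O[cobounded ℂ ⊓ 𝓟 S] fun w => Real.exp (B * ‖w‖ ^ c) := fun S =>
    ⟨1, one_lt_two, a, Asymptotics.IsBigO.of_bound M (Eventually.of_forall fun w => by
      rw [Real.rpow_one, Real.norm_of_nonneg (Real.exp_pos _).le]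
      calc ‖G w‖ ≤ M * Real.exp (a * |(w + κ).im|) := hgrowth _
        _ ≤ M * Real.exp (a * ‖w‖) := by
          simp only [add_im, ofReal_im, add_zero]
          gcongr
          exact abs_im_le_norm w)⟩
  have hre : ∀ x : ℝ, ‖G x‖ ≤ max C (M * Real.exp (a * max η₀ 0)) := fun x => by
    refine le_max_of_le_right ((hgrowth _).trans ?_)
    simp only [← ofReal_add, ofReal_im, abs_zero, mul_zero]
    gcongr
    exact mul_nonneg ha (le_max_right _ _)
  have him : ∀ y : ℝ, 0 ≤ y → ‖G (y * I)‖ ≤ max C (M * Real.exp (a * max η₀ 0)) := fun y hy => by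
    show ‖g (y * I + κ)‖ ≤ _
    rw [show (y : ℂ) * I + κ = κ + y * I by ring]
    rcases le_or_gt η₀ y with hy₀ | hy₀
    · exact le_max_of_le_left (hray y hy₀)
    · refine le_max_of_le_right ((hgrowth _).trans ?_)
      simp only [add_im, ofReal_im, mul_im, ofReal_re, I_im, I_re, mul_one, mul_zero, add_zero,
        zero_add, abs_of_nonneg hy]
      gcongr
      exact hy₀.le.trans (le_max_left _ _)
  have hzκ : ‖G (z - κ)‖ ≤ max C (M * Real.exp (a * max η₀ 0)) := by
    rcases le_total κ z.re with hκ | hκ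
    · exact PhragmenLindelof.quadrant_I hd.diffContOnCl (hgrowth' _) (fun x _ => hre x) him
        (by simpa using hκ) (by simpa using hz)
    · exact PhragmenLindelof.quadrant_II hd.diffContOnCl (hgrowth' _) (fun x _ => hre x) him
        (by simpa using hκ) (by simpa using hz)
  simpa [G] using hzκ

section FourierLaplace

variable {V : Type*} [NormedAddCommGroup V] [InnerProductSpace ℝ V]

lemma norm_cexp_I_mul_ofReal (z : ℂ) (t : ℝ) : ‖cexp (I * z * t)‖ = Real.exp (-(z.im * t)) := by
  rw [Complex.norm_exp]
  simp [Complex.mul_re]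

variable {f : V → ℂ} {a : ℝ} {β : V}

lemma abs_inner_le_of_mem_support (hsupp : support f ⊆ closedBall 0 a) (hβ : ‖β‖ ≤ 1) {x : V}
    (hx : f x ≠ 0) : |⟪β, x⟫| ≤ a :=
  calc |⟪β, x⟫| ≤ ‖β‖ * ‖x‖ := abs_real_inner_le_norm β x
    _ ≤ 1 * ‖x‖ := by gcongr
    _ ≤ a := by simpa using hsupp hx

lemma norm_mul_cexp_le (hsupp : support f ⊆ closedBall 0 a) (hβ : ‖β‖ ≤ 1) {z : ℂ} {c : ℝ}
    (hz : |z.im| ≤ c) (x : V) : ‖f x * cexp (I * z * ⟪β, x⟫)‖ ≤ ‖f x‖ * Real.exp (a * c) := by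
  rcases eq_or_ne (f x) 0 with hx | hx
  · simp [hx]
  rw [norm_mul, norm_cexp_I_mul_ofReal]
  gcongr
  calc -(z.im * ⟪β, x⟫) ≤ |z.im| * |⟪β, x⟫| := by rw [← abs_mul]; exact neg_le_abs _
    _ ≤ c * a := mul_le_mul hz (abs_inner_le_of_mem_support hsupp hβ hx) (abs_nonneg _)
        ((abs_nonneg _).trans hz)
    _ = a * c := mul_comm c a

lemma exists_norm_eq_one_smul [Nontrivial V] (w : V) : ∃ u : V, ‖u‖ = 1 ∧ w = ‖w‖ • u := by
  rcases eq_or_ne w 0 with rfl | hw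
  · obtain ⟨u, hu⟩ := exists_norm_eq V zero_le_one
    exact ⟨u, hu, by simp⟩
  · exact ⟨‖w‖⁻¹ • w, by simp [norm_smul, hw], by simp [smul_smul, hw]⟩

variable [MeasurableSpace V]

noncomputable def fourierLaplace (μ : Measure V) (f : V → ℂ) (β : V) (z : ℂ) : ℂ :=
  ∫ x, f x * cexp (I * z * ⟪β, x⟫) ∂μ

lemma ptilde_eq_fourierLaplace (p : EuclideanSpace ℝ (Fin 3) → ℝ) :
    ptilde p = fourierLaplace volume (fun x => (p x : ℂ)) := rfl

variable {μ : Measure V}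

lemma fourierLaplace_smul (r : ℝ) (β : V) (z : ℂ) :
    fourierLaplace μ f (r • β) z = fourierLaplace μ f β (r * z) := by
  unfold fourierLaplace
  congr 1 with x
  rw [real_inner_smul_left]
  congr 2
  push_cast
  ring

lemma fourierLaplace_neg (β : V) (z : ℂ) :
    fourierLaplace μ f (-β) z = fourierLaplace μ f β (-z) := by
  simpa using fourierLaplace_smul (μ := μ) (f := f) (-1) β z

lemma norm_fourierLaplace_le (hf : Integrable f μ) (hsupp : support f ⊆ closedBall 0 a)
    (hβ : ‖β‖ ≤ 1) (z : ℂ) :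
    ‖fourierLaplace μ f β z‖ ≤ (∫ x, ‖f x‖ ∂μ) * Real.exp (a * |z.im|) := by
  rw [← integral_mul_const]
  exact norm_integral_le_of_norm_le (hf.norm.mul_const _)
    (Eventually.of_forall (norm_mul_cexp_le hsupp hβ le_rfl))

variable [BorelSpace V]

lemma aestronglyMeasurable_mul_cexp (hf : Integrable f μ) (β : V) (z : ℂ) :
    AEStronglyMeasurable (fun x => f x * cexp (I * z * ⟪β, x⟫)) μ :=
  hf.1.mul (by fun_prop : Continuous fun x : V => cexp (I * z * ⟪β, x⟫)).aestronglyMeasurable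

lemma integrable_mul_cexp (hf : Integrable f μ) (hsupp : support f ⊆ closedBall 0 a)
    (hβ : ‖β‖ ≤ 1) (z : ℂ) : Integrable (fun x => f x * cexp (I * z * ⟪β, x⟫)) μ :=
  (hf.norm.mul_const _).mono' (aestronglyMeasurable_mul_cexp hf β z)
    (Eventually.of_forall (norm_mul_cexp_le hsupp hβ le_rfl))

lemma differentiable_fourierLaplace (hf : Integrable f μ) (hsupp : support f ⊆ closedBall 0 a)
    (hβ : ‖β‖ ≤ 1) : Differentiable ℂ (fourierLaplace μ f β) := by
  intro z₀
  have him : ∀ z ∈ ball z₀ 1, |z.im| ≤ |z₀.im| + 1 := fun z hz => by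
    have := (abs_sub_abs_le_abs_sub z.im z₀.im).trans
      ((abs_im_le_norm (z - z₀)).trans (mem_ball_iff_norm.1 hz).le)
    linarith
  have hderiv : ∀ x : V, ∀ z : ℂ, HasDerivAt (fun w : ℂ => f x * cexp (I * w * ⟪β, x⟫))
      (I * ⟪β, x⟫ * (f x * cexp (I * z * ⟪β, x⟫))) z := fun x z => by
    refine ((((hasDerivAt_id z).const_mul I).mul_const (⟪β, x⟫ : ℂ)).cexp.const_mul
      (f x)).congr_deriv ?_
    simp only [id]
    ring
  refine (hasDerivAt_integral_of_dominated_loc_of_deriv_le (ball_mem_nhds z₀ one_pos)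
    (Eventually.of_forall (aestronglyMeasurable_mul_cexp hf β))
    (integrable_mul_cexp hf hsupp hβ z₀)
    ((by fun_prop : Continuous fun x : V => I * (⟪β, x⟫ : ℂ)).aestronglyMeasurable.mul
      (aestronglyMeasurable_mul_cexp hf β z₀))
    (bound := fun x => a * (‖f x‖ * Real.exp (a * (|z₀.im| + 1)))) ?_
    ((hf.norm.mul_const _).const_mul a)
    (Eventually.of_forall fun x z _ => hderiv x z)).2.differentiableAt
  refine Eventually.of_forall fun x z hz => ?_
  rcases eq_or_ne (f x) 0 with hx | hx
  · simp [hx]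
  rw [norm_mul, norm_mul, norm_I, one_mul, norm_real, Real.norm_eq_abs]
  exact mul_le_mul (abs_inner_le_of_mem_support hsupp hβ hx)
    (norm_mul_cexp_le hsupp hβ (him z hz) x) (norm_nonneg _)
    ((abs_nonneg _).trans (abs_inner_le_of_mem_support hsupp hβ hx))

lemma norm_fourierLaplace_le_of_bounded_on_vertical_ray (hf : Integrable f μ)
    (hsupp : support f ⊆ closedBall 0 a) (ha : 0 ≤ a) {κ η₀ C : ℝ}
    (hray : ∀ β : V, ‖β‖ = 1 → ∀ η, η₀ ≤ η → ‖fourierLaplace μ f β (κ + η * I)‖ ≤ C)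
    (hβ : ‖β‖ = 1) (z : ℂ) :
    ‖fourierLaplace μ f β z‖ ≤ max C ((∫ x, ‖f x‖ ∂μ) * Real.exp (a * max η₀ 0)) := by
  wlog hz : 0 ≤ z.im generalizing β z
  · rw [← neg_neg β, fourierLaplace_neg]
    exact this (by rwa [norm_neg]) (-z) (by simp only [neg_im]; linarith)
  exact PhragmenLindelof.upper_half_plane_of_bounded_on_vertical_ray
    (differentiable_fourierLaplace hf hsupp hβ.le) ha (norm_fourierLaplace_le hf hsupp hβ.le)
    (hray β hβ) hz


variable [FiniteDimensional ℝ V]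

lemma fourierLaplace_ofReal_eq_fourier (β : V) (t : ℝ) :
    fourierLaplace volume f β t = 𝓕 f ((-(t / (2 * π))) • β) := by
  rw [Real.fourier_eq', fourierLaplace]
  congr 1 with x
  rw [smul_eq_mul, mul_comm, real_inner_smul_right, real_inner_comm]
  congr 1
  push_cast
  field_simp

lemma tendsto_fourierLaplace_ofReal_atTop (hβ : β ≠ 0) :
    Tendsto (fun t : ℝ => fourierLaplace volume f β t) atTop (𝓝 0) := by
  have hsmul : Tendsto (fun t : ℝ => (-(t / (2 * π))) • β) atTop (cocompact V) := by
    rw [← cobounded_eq_cocompact, ← tendsto_norm_atTop_iff_cobounded]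
    refine ((tendsto_abs_atTop_atTop.atTop_div_const (by positivity : (0 : ℝ) < 2 * π))
      |>.atTop_mul_const (norm_pos_iff.2 hβ)).congr fun t => ?_
    simp [norm_smul, abs_of_pos Real.pi_pos]
  refine ((tendsto_integral_exp_inner_smul_cocompact f).comp hsmul).congr fun t => ?_
  rw [fourierLaplace_ofReal_eq_fourier]
  rfl

lemma fourier_eq_zero_of_fourierLaplace_ofReal_eq_zero [Nontrivial V]
    (h : ∀ u : V, ‖u‖ = 1 → ∀ t : ℝ, fourierLaplace volume f u t = 0) : 𝓕 f = 0 := by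
  ext w
  obtain ⟨u, hu, hw⟩ := exists_norm_eq_one_smul w
  have := fourierLaplace_ofReal_eq_fourier (f := f) u (-(2 * π * ‖w‖))
  rw [h u hu, neg_div, neg_neg, mul_div_cancel_left₀ _ (by positivity)] at this
  rw [hw, ← this, Pi.zero_apply]

theorem MeasureTheory.Integrable.ae_eq_zero_of_fourier_eq_zero {E : Type*} [NormedAddCommGroup E]
    [NormedSpace ℂ E] [CompleteSpace E] {g : V → E} (hg : Integrable g) (h : 𝓕 g = 0) :
    g =ᵐ[volume] 0 := by
  refine ae_eq_zero_of_integral_contDiff_smul_eq_zero hg.locallyIntegrable fun φ hφ hφc => ?_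
  set ψ : 𝓢(V, ℂ) := 𝓕⁻ ((hφc.comp_left Complex.ofReal_zero).toSchwartzMap
    (ofRealCLM.contDiff.comp hφ))
  have hψ : 𝓕 (ψ : V → ℂ) = fun x => (φ x : ℂ) := by
    rw [← SchwartzMap.fourier_coe, FourierTransform.fourier_fourierInv_eq]
    rfl
  calc ∫ x, φ x • g x = ∫ x, 𝓕 (ψ : V → ℂ) x • g x := by simp [hψ, Complex.coe_smul]
    _ = ∫ x, ψ x • 𝓕 g x := by
      simpa using! VectorFourier.integral_fourierIntegral_smul_eq_flip (L := innerₗ V)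
        Real.continuous_fourierChar continuous_inner ψ.integrable hg
    _ = 0 := by simp [h]

lemma fourierLaplace_eq_zero_of_bounded_on_vertical_ray (hf : Integrable f)
    (hsupp : support f ⊆ closedBall 0 a) (ha : 0 ≤ a) {κ η₀ C : ℝ}
    (hray : ∀ β : V, ‖β‖ = 1 → ∀ η, η₀ ≤ η → ‖fourierLaplace volume f β (κ + η * I)‖ ≤ C)
    (hβ : ‖β‖ = 1) : fourierLaplace volume f β = 0 :=
  (differentiable_fourierLaplace hf hsupp hβ.le).eq_zero_of_isBounded_of_tendsto_atTop
    (isBounded_iff_forall_norm_le.2 ⟨_, forall_mem_range.2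
      (norm_fourierLaplace_le_of_bounded_on_vertical_ray hf hsupp ha hray hβ)⟩)
    (tendsto_fourierLaplace_ofReal_atTop (norm_ne_zero_iff.1 (hβ ▸ one_ne_zero)))

end FourierLaplace

lemma exists_eventually_forall_norm_le_of_limsup_ne_top {α ι E : Type*} [SeminormedAddGroup E]
    {l : Filter α} {F : α → ι → E} (h : limsup (fun x => ⨆ i, (‖F x i‖₊ : ℝ≥0∞)) l ≠ ⊤) :
    ∃ C : ℝ, ∀ᶠ x in l, ∀ i, ‖F x i‖ ≤ C := by
  obtain ⟨D, hlt, hD⟩ := exists_between (lt_top_iff_ne_top.2 h)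
  refine ⟨D.toReal, (eventually_lt_of_limsup_lt hlt).mono fun x hx i => ?_⟩
  simpa using ENNReal.toReal_mono hD.ne ((le_iSup (fun i => (‖F x i‖₊ : ℝ≥0∞)) i).trans hx.le)

theorem stmt_1_general (a : ℝ) (ha : 0 < a)
    (p : EuclideanSpace ℝ (Fin 3) → ℝ) (hint : Integrable p)
    (hsupp : Function.support p ⊆ Metric.closedBall 0 a)
    (hp : ¬ (p =ᵐ[volume] 0)) (κ : ℝ) :
    Filter.limsup
      (fun η : ℝ => ⨆ β : Metric.sphere (0 : EuclideanSpace ℝ (Fin 3)) 1,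
        (‖ptilde p (β : EuclideanSpace ℝ (Fin 3)) (κ + η * Complex.I)‖₊ : ℝ≥0∞))
      Filter.atTop = ⊤ := by
  set f : EuclideanSpace ℝ (Fin 3) → ℂ := fun x => (p x : ℂ)
  have hfsupp : support f ⊆ closedBall 0 a := by simpa [f, support] using hsupp
  by_contra hne
  rw [ptilde_eq_fourierLaplace] at hne
  obtain ⟨C, hC⟩ := exists_eventually_forall_norm_le_of_limsup_ne_top hne
  obtain ⟨η₀, hη₀⟩ := eventually_atTop.1 hC
  have hzero (β : EuclideanSpace ℝ (Fin 3)) (hβ : ‖β‖ = 1) (t : ℝ) :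
      fourierLaplace volume f β t = 0 :=
    congrFun (fourierLaplace_eq_zero_of_bounded_on_vertical_ray hint.ofReal hfsupp ha.le
      (fun β hβ η hη => hη₀ η hη ⟨β, by simpa using hβ⟩) hβ) t
  refine hp ((hint.ofReal.ae_eq_zero_of_fourier_eq_zero
    (fourier_eq_zero_of_fourierLaplace_ofReal_eq_zero hzero)).mono fun x hx => ?_)
  simpa [f] using hx

theorem stmt_1 (a : ℝ) (ha : 0 < a)
    (p : EuclideanSpace ℝ (Fin 3) → ℝ) (hint : Integrable p)
    (hsupp : Function.support p ⊆ Metric.closedBall 0 a)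
    (hp : ¬ (p =ᵐ[volume] 0)) (κ : ℝ) (hκ : 0 ≤ κ) :
    Filter.limsup
      (fun η : ℝ => ⨆ β : Metric.sphere (0 : EuclideanSpace ℝ (Fin 3)) 1,
        (‖ptilde p (β : EuclideanSpace ℝ (Fin 3)) (κ + η * Complex.I)‖₊ : ℝ≥0∞))
      Filter.atTop = ⊤ :=
  stmt_1_general a ha p hint hsupp hp κ
end

section
/- Let a > 0, let g : ℝ → ℂ be integrable with support contained in [−a, a], and let c ∈ ℂ. If ∫_ℝ g(λ) e^{i z λ} dλ = c for every z ∈ ℂ, then c = 0 and g = 0 almost everywhere. -/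
/-!
Taking `z = -2πξ` real, the hypothesis says that the Fourier transform of `g` is the constant `c`.
By the Riemann–Lebesgue lemma `𝓕 g` vanishes at infinity, so `c = 0`, and an integrable function
with vanishing Fourier transform is zero almost everywhere: pairing `g` with a test function
`ψ = 𝓕 (𝓕⁻ ψ)` and moving `𝓕` across the integral gives `∫ ψ g = ∫ (𝓕⁻ ψ) (𝓕 g) = 0`.
-/

open MeasureTheory Complex

open scoped FourierTransform ContDiff

namespace Real

variable {V E : Type*} [NormedAddCommGroup V] [InnerProductSpace ℝ V]
  [MeasurableSpace V] [BorelSpace V] [FiniteDimensional ℝ V]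
  [NormedAddCommGroup E] [NormedSpace ℂ E]

theorem eq_zero_of_forall_fourier_eq [Nontrivial V] {f : V → E} {c : E}
    (h : ∀ w, 𝓕 f w = c) : c = 0 :=
  tendsto_nhds_unique tendsto_const_nhds <|
    (tendsto_integral_exp_inner_smul_cocompact f).congr h

variable [CompleteSpace E]

theorem integral_fourier_smul_eq {f : V → ℂ} {g : V → E} (hf : Integrable f)
    (hg : Integrable g) : ∫ ξ, 𝓕 f ξ • g ξ = ∫ x, f x • 𝓕 g x := by
  simpa using! VectorFourier.integral_fourierIntegral_smul_eq_flip (L := innerₗ V)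
    continuous_fourierChar continuous_inner hf hg

theorem ae_eq_zero_of_fourier_eq_zero {f : V → E} (hf : Integrable f) (h : 𝓕 f = 0) :
    f =ᵐ[volume] 0 := by
  refine ae_eq_zero_of_integral_contDiff_smul_eq_zero hf.locallyIntegrable fun φ hφ hφc ↦ ?_
  have hψc : HasCompactSupport (ofRealCLM ∘ φ) := hφc.comp_left rfl
  have hψ : ContDiff ℝ ∞ (ofRealCLM ∘ φ) := by fun_prop
  set ψ := hψc.toSchwartzMap hψ
  calc ∫ x, φ x • f x = ∫ x, ψ x • f x := by simp [ψ]
    _ = ∫ x, 𝓕 (𝓕⁻ ψ) x • f x := by rw [FourierTransform.fourier_fourierInv_eq]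
    _ = ∫ ξ, 𝓕⁻ ψ ξ • 𝓕 f ξ := by
      rw [SchwartzMap.fourier_coe]
      exact integral_fourier_smul_eq (𝓕⁻ ψ).integrable hf
    _ = 0 := by simp [h]

theorem fourier_eq_integral_mul_cexp (g : ℝ → ℂ) (ξ : ℝ) :
    𝓕 g ξ = ∫ x, g x * cexp (I * ↑(-2 * π * ξ) * x) := by
  rw [fourier_real_eq_integral_exp_smul]
  congr with x
  rw [smul_eq_mul, mul_comm]
  push_cast
  ring_nf

end Real

theorem stmt_5_general
    (g : ℝ → ℂ) (hint : Integrable g)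
    (c : ℂ)
    (hconst : ∀ z : ℂ, (∫ l : ℝ, g l * Complex.exp (Complex.I * z * (l : ℂ))) = c) :
    c = 0 ∧ g =ᵐ[volume] 0 := by
  have hF : ∀ ξ, 𝓕 g ξ = c := fun ξ ↦ by
    rw [Real.fourier_eq_integral_mul_cexp, hconst]
  have hc : c = 0 := Real.eq_zero_of_forall_fourier_eq hF
  exact ⟨hc, Real.ae_eq_zero_of_fourier_eq_zero hint (funext fun ξ ↦ (hF ξ).trans hc)⟩

theorem stmt_5 (a : ℝ) (ha : 0 < a)
    (g : ℝ → ℂ) (hint : Integrable g)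
    (hsupp : Function.support g ⊆ Set.Icc (-a) a)
    (c : ℂ)
    (hconst : ∀ z : ℂ, (∫ l : ℝ, g l * Complex.exp (Complex.I * z * (l : ℂ))) = c) :
    c = 0 ∧ g =ᵐ[volume] 0 :=
  stmt_5_general g hint c hconst
end

section
/- Let a > 0, let p : ℝ³ → ℝ be integrable with support contained in the closed ball B̄_a = {x ∈ ℝ³ : |x| ≤ a}, and fix η ∈ ℝ. Then lim_{κ→+∞} sup_{β ∈ S²} |p̃((κ + iη)β)| = 0. -/
open MeasureTheory Complex Filter

/-!
Writing `e^{i(κ + iη)⟨β, x⟩} = e^{iκ⟨β, x⟩} e^{-η⟨β, x⟩}`, the value `p̃((κ + iη)β)` is the Fourier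
transform, at a frequency of size `κ / 2π`, of the tilted function `q(x) = p(x) e^{-η⟨β, x⟩}`.
Translating `q` by the half period `u = -(π / κ) β` flips the sign of the oscillating factor, so
`2 |p̃| ≤ ∫ |q(x) - q(x + u)|`, which is the Riemann–Lebesgue argument. Because `p` is supported in
a ball the weight is bounded, and `∫ |q(x) - q(x + u)|` is at most a constant times
`∫ |p(x + u) - p(x)| + |1 - e^{ηπ/κ}| ∫ |p|`. Both terms depend on `β` only through `u`, whose
length is `π / κ`, so continuity of translation in `L¹` makes them small uniformly on the sphere.
-/

open Topology Metric
open scoped Real FourierTransform RealInnerProductSpace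

section Translation

variable {E F : Type*} [NormedAddCommGroup E] [MeasurableSpace E] [ProperSpace E]
  [NormedAddCommGroup F] {μ : Measure E}

theorem HasCompactSupport.tendsto_integral_norm_comp_add_sub [IsFiniteMeasureOnCompacts μ]
    {g : E → F} (hg : HasCompactSupport g) (hc : Continuous g) :
    Tendsto (fun v => ∫ x, ‖g (x + v) - g x‖ ∂μ) (𝓝 0) (𝓝 0) := by
  set K := cthickening 1 (tsupport g)
  have hK : μ K < ⊤ := (hg.isCompact.cthickening).measure_lt_top
  have hvanish : ∀ v : E, ‖v‖ ≤ 1 → ∀ x ∉ K, ‖g (x + v) - g x‖ = 0 := by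
    intro v hv x hx
    have hx' : x ∉ tsupport g := fun h => hx (self_subset_cthickening _ h)
    have hxv : x + v ∉ tsupport g := fun h => hx <|
      mem_cthickening_of_dist_le x (x + v) 1 _ h (by simpa [dist_eq_norm] using hv)
    rw [image_eq_zero_of_notMem_tsupport hx', image_eq_zero_of_notMem_tsupport hxv, sub_zero,
      norm_zero]
  have hunif : ∀ ε > 0, ∀ᶠ v in 𝓝 (0 : E), ∀ x, ‖g (x + v) - g x‖ < ε := by
    intro ε hε
    obtain ⟨δ, hδ, hgδ⟩ := Metric.uniformContinuous_iff.1
      (hg.uniformContinuous_of_continuous hc) ε hε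
    filter_upwards [ball_mem_nhds 0 hδ] with v hv x
    rw [← dist_eq_norm]
    exact hgδ (by simpa [dist_eq_norm] using hv)
  rw [Metric.tendsto_nhds]
  intro ε hε
  filter_upwards [hunif (ε / (μ.real K + 1)) (by positivity), closedBall_mem_nhds 0 one_pos]
    with v hv hv1
  rw [mem_closedBall_zero_iff] at hv1
  rw [dist_zero_right, ← setIntegral_eq_integral_of_forall_compl_eq_zero (hvanish v hv1)]
  calc ‖∫ x in K, ‖g (x + v) - g x‖ ∂μ‖
      ≤ ε / (μ.real K + 1) * μ.real K :=
        norm_setIntegral_le_of_norm_le_const hK fun x _ => by rw [norm_norm]; exact (hv x).le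
    _ < ε := by
        rw [div_mul_eq_mul_div, div_lt_iff₀ (by positivity)]
        nlinarith [measureReal_nonneg (μ := μ) (s := K)]

theorem MeasureTheory.Integrable.tendsto_integral_norm_comp_add_sub [BorelSpace E]
    [NormedSpace ℝ F] [μ.Regular] [μ.IsAddRightInvariant] {f : E → F} (hf : Integrable f μ) :
    Tendsto (fun v => ∫ x, ‖f (x + v) - f x‖ ∂μ) (𝓝 0) (𝓝 0) := by
  rw [Metric.tendsto_nhds]
  intro ε hε
  obtain ⟨g, hg, hfg, hgc, hgi⟩ := hf.exists_hasCompactSupport_integral_sub_le (ε := ε / 3)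
    (by positivity)
  filter_upwards [Metric.tendsto_nhds.1 (hg.tendsto_integral_norm_comp_add_sub (μ := μ) hgc)
    (ε / 3) (by positivity)] with v hv
  have hfgi : Integrable (fun x => ‖f x - g x‖) μ := (hf.sub hgi).norm
  have hgvi : Integrable (fun x => ‖g (x + v) - g x‖) μ :=
    ((hgi.comp_add_right v).sub hgi).norm
  have hshift : ∫ x, ‖f (x + v) - g (x + v)‖ ∂μ = ∫ x, ‖f x - g x‖ ∂μ :=
    integral_add_right_eq_self (fun x => ‖f x - g x‖) v
  have htri : ∫ x, ‖f (x + v) - f x‖ ∂μ ≤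
      ∫ x, ‖f (x + v) - g (x + v)‖ + ‖g (x + v) - g x‖ + ‖f x - g x‖ ∂μ := by
    refine integral_mono ((hf.comp_add_right v).sub hf).norm
      (((hfgi.comp_add_right v).add hgvi).add hfgi) fun x => ?_
    calc ‖f (x + v) - f x‖ ≤ ‖f (x + v) - g (x + v)‖ + ‖g (x + v) - f x‖ :=
          norm_sub_le_norm_sub_add_norm_sub _ _ _
      _ ≤ ‖f (x + v) - g (x + v)‖ + (‖g (x + v) - g x‖ + ‖g x - f x‖) := by
          gcongr; exact norm_sub_le_norm_sub_add_norm_sub _ _ _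
      _ = _ := by rw [norm_sub_rev (g x), add_assoc]
  rw [integral_add (f := fun x => ‖f (x + v) - g (x + v)‖ + ‖g (x + v) - g x‖)
    ((hfgi.comp_add_right v).add hgvi) hfgi,
    integral_add (hfgi.comp_add_right v) hgvi, hshift] at htri
  rw [Real.dist_eq, sub_zero, abs_of_nonneg (integral_nonneg fun _ => norm_nonneg _)]
  rw [Real.dist_eq, sub_zero] at hv
  linarith [le_abs_self (∫ x, ‖g (x + v) - g x‖ ∂μ)]

end Translation

theorem tendsto_iSup_of_tendsto_prod_top {α ι : Type*} {l : Filter α} {f : α → ι → ℝ}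
    (hf : ∀ x i, 0 ≤ f x i) (h : Tendsto (fun q : α × ι => f q.1 q.2) (l ×ˢ ⊤) (𝓝 0)) :
    Tendsto (fun x => ⨆ i, f x i) l (𝓝 0) := by
  refine tendsto_order.2 ⟨fun b hb => Eventually.of_forall fun x =>
    hb.trans_le (Real.iSup_nonneg (hf x)), fun b hb => ?_⟩
  obtain ⟨c, hc0, hcb⟩ := exists_between hb
  have hc := h.eventually (gt_mem_nhds hc0)
  rw [prod_top, eventually_comap] at hc
  filter_upwards [hc] with x hx
  exact (Real.iSup_le (fun i => (hx (x, i) rfl).le) hc0.le).trans_lt hcb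

theorem norm_fourierIntegral_le_half_integral_norm_sub {V E : Type*} [NormedAddCommGroup E]
    [NormedSpace ℂ E] [NormedAddCommGroup V] [MeasurableSpace V] [BorelSpace V]
    [InnerProductSpace ℝ V] [FiniteDimensional ℝ V] {f : V → E} (hf : Integrable f) {w : V}
    (hw : w ≠ 0) :
    ‖∫ v, 𝐞 (-⟪v, w⟫) • f v‖ ≤ 1 / 2 * ∫ v, ‖f v - f (v + (1 / (2 * ‖w‖ ^ 2)) • w)‖ := by
  rw [fourierIntegral_eq_half_sub_half_period_translate hw hf, norm_smul]
  gcongr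
  · simp
  · refine (norm_integral_le_integral_norm _).trans_eq ?_
    simp only [Circle.norm_smul]

section Tilt

variable {V : Type*} [NormedAddCommGroup V] [InnerProductSpace ℝ V]

noncomputable def expTilt (p : V → ℝ) (η : ℝ) (β x : V) : ℝ := p x * Real.exp (-(η * ⟪β, x⟫))

theorem exp_neg_mul_inner_le {β x : V} (hβ : ‖β‖ ≤ 1) (η : ℝ) {R : ℝ} (hx : ‖x‖ ≤ R) :
    Real.exp (-(η * ⟪β, x⟫)) ≤ Real.exp (|η| * R) := by
  refine Real.exp_le_exp.2 ((neg_le_abs _).trans ?_)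
  rw [abs_mul]
  gcongr
  calc |⟪β, x⟫| ≤ ‖β‖ * ‖x‖ := abs_real_inner_le_norm β x
    _ ≤ R := by nlinarith [norm_nonneg β, norm_nonneg x]

/-- The translation vector of `fourierIntegral_eq_half_sub_half_period_translate` at the
frequency `-(κ / 2π) β`. -/
theorem half_period_smul_eq {β : V} (hβ : ‖β‖ = 1) {κ : ℝ} (hκ : κ ≠ 0) :
    (1 / (2 * ‖-(κ / (2 * π)) • β‖ ^ 2)) • (-(κ / (2 * π)) • β) = -(π / κ) • β := by
  rw [norm_smul, hβ, mul_one, Real.norm_eq_abs, sq_abs, smul_smul]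
  congr 1
  field_simp

variable {p : V → ℝ} {a η : ℝ} {β : V}

theorem norm_expTilt_sub_comp_add_le (hsupp : Function.support p ⊆ closedBall 0 a)
    (hβ : ‖β‖ ≤ 1) (x u : V) :
    ‖expTilt p η β x - expTilt p η β (x + u)‖ ≤ Real.exp (|η| * (a + ‖u‖)) *
      (‖p (x + u) - p x‖ + |1 - Real.exp (-(η * ⟪β, u⟫))| * ‖p x‖) := by
  set C := Real.exp (|η| * (a + ‖u‖))
  set W := fun y => Real.exp (-(η * ⟪β, y⟫))
  set s := Real.exp (-(η * ⟪β, u⟫))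
  have hball : ∀ y, p y ≠ 0 → ‖y‖ ≤ a := fun y hy => mem_closedBall_zero_iff.1 (hsupp hy)
  have hweight : ∀ {r : ℝ} {y : V}, (r ≠ 0 → ‖y‖ ≤ a + ‖u‖) → |r| * W y ≤ |r| * C := by
    intro r y hy
    by_cases hr : r = 0
    · simp [hr]
    · exact mul_le_mul_of_nonneg_left (exp_neg_mul_inner_le hβ η (hy hr)) (abs_nonneg r)
  have hWu : W (x + u) = W x * s := by
    simp only [W, s, inner_add_right, mul_add, neg_add, Real.exp_add]
  have hsplit : expTilt p η β x - expTilt p η β (x + u) =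
      (p x - p (x + u)) * W (x + u) + p x * W x * (1 - s) := by
    simp only [expTilt, W, hWu]; ring
  have h₁ : |p x - p (x + u)| * W (x + u) ≤ |p x - p (x + u)| * C := by
    refine hweight fun hne => ?_
    by_cases hx : p x = 0
    · linarith [hball (x + u) fun h => hne (by rw [hx, h, sub_zero]), norm_nonneg u]
    · linarith [hball x hx, norm_add_le x u]
  have h₂ : |p x| * W x ≤ |p x| * C := hweight fun hx => by linarith [hball x hx, norm_nonneg u]
  rw [hsplit, Real.norm_eq_abs, Real.norm_eq_abs, Real.norm_eq_abs, abs_sub_comm (p (x + u))]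
  calc |(p x - p (x + u)) * W (x + u) + p x * W x * (1 - s)|
      ≤ |p x - p (x + u)| * W (x + u) + |p x| * W x * |1 - s| := by
        refine (abs_add_le _ _).trans_eq ?_
        simp only [abs_mul, abs_of_pos (Real.exp_pos _), W]
    _ ≤ |p x - p (x + u)| * C + |p x| * C * |1 - s| := by gcongr
    _ = C * (|p x - p (x + u)| + |1 - s| * |p x|) := by ring

variable [MeasurableSpace V] [BorelSpace V] {μ : Measure V}

theorem MeasureTheory.Integrable.expTilt (hp : Integrable p μ)
    (hsupp : Function.support p ⊆ closedBall 0 a) (hβ : ‖β‖ ≤ 1) :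
    Integrable (expTilt p η β) μ := by
  refine (hp.norm.const_mul (Real.exp (|η| * a))).mono'
    (hp.aestronglyMeasurable.mul (by fun_prop)) (Eventually.of_forall fun x => ?_)
  rw [_root_.expTilt, norm_mul, Real.norm_of_nonneg (Real.exp_pos _).le, mul_comm]
  by_cases hx : p x = 0
  · simp [hx]
  · exact mul_le_mul_of_nonneg_right
      (exp_neg_mul_inner_le hβ η (mem_closedBall_zero_iff.1 (hsupp hx))) (norm_nonneg _)

theorem integral_norm_expTilt_sub_comp_add_le [μ.IsAddRightInvariant] (hp : Integrable p μ)
    (hsupp : Function.support p ⊆ closedBall 0 a) (hβ : ‖β‖ ≤ 1) (u : V) :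
    ∫ x, ‖expTilt p η β x - expTilt p η β (x + u)‖ ∂μ ≤ Real.exp (|η| * (a + ‖u‖)) *
      (∫ x, ‖p (x + u) - p x‖ ∂μ + |1 - Real.exp (-(η * ⟪β, u⟫))| * ∫ x, ‖p x‖ ∂μ) := by
  have hint : Integrable (fun x => ‖p (x + u) - p x‖) μ := ((hp.comp_add_right u).sub hp).norm
  rw [← integral_const_mul (μ := μ) |1 - _|, ← integral_add hint (hp.norm.const_mul _),
    ← integral_const_mul]
  exact integral_mono_of_nonneg (Eventually.of_forall fun _ => norm_nonneg _)
    ((hint.add (hp.norm.const_mul _)).const_mul _)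
    (Eventually.of_forall fun x => norm_expTilt_sub_comp_add_le hsupp hβ x u)

end Tilt

local notation "ℝ³" => EuclideanSpace ℝ (Fin 3)
local notation "S²" => sphere (0 : ℝ³) 1

theorem ptilde_eq_fourierIntegral_expTilt (p : ℝ³ → ℝ) (β : ℝ³) (κ η : ℝ) :
    ptilde p β (κ + η * I) =
      ∫ x, 𝐞 (-⟪x, -(κ / (2 * π)) • β⟫) • (expTilt p η β x : ℂ) := by
  unfold ptilde
  congr 1 with x
  have hphase : I * (κ + η * I) * ⟪β, x⟫ =
      ((2 * π * -⟪x, -(κ / (2 * π)) • β⟫ : ℝ) : ℂ) * I + (-(η * ⟪β, x⟫) : ℝ) := by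
    rw [real_inner_smul_right, real_inner_comm β x]
    push_cast
    field_simp
    linear_combination ((η : ℂ) * ⟪β, x⟫) * I_sq
  rw [Circle.smul_def, Real.fourierChar_apply, smul_eq_mul, expTilt, hphase, Complex.exp_add,
    ofReal_mul (p x), ofReal_exp]
  ring

theorem norm_ptilde_le {p : ℝ³ → ℝ} (hp : Integrable p) {a : ℝ}
    (hsupp : Function.support p ⊆ closedBall 0 a) {β : ℝ³} (hβ : ‖β‖ = 1)
    {κ : ℝ} (hκ : 0 < κ) (η : ℝ) :
    ‖ptilde p β (κ + η * I)‖ ≤ Real.exp (|η| * (a + π / κ)) / 2 *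
      ((∫ x, ‖p (x + -(π / κ) • β) - p x‖) +
        |1 - Real.exp (η * (π / κ))| * ∫ x, ‖p x‖) := by
  have hw : -(κ / (2 * π)) • β ≠ 0 :=
    smul_ne_zero (by simp [hκ.ne', Real.pi_ne_zero]) (norm_ne_zero_iff.1 (by simp [hβ]))
  have hu : ‖-(π / κ) • β‖ = π / κ := by
    rw [norm_smul, hβ, mul_one, norm_neg, Real.norm_of_nonneg (by positivity)]
  have hβu : -(η * ⟪β, -(π / κ) • β⟫) = η * (π / κ) := by
    rw [real_inner_smul_right, real_inner_self_eq_norm_sq, hβ]; ring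
  have htilt := integral_norm_expTilt_sub_comp_add_le (η := η) hp hsupp hβ.le (-(π / κ) • β)
  rw [hu, hβu] at htilt
  rw [ptilde_eq_fourierIntegral_expTilt]
  refine (norm_fourierIntegral_le_half_integral_norm_sub (hp.expTilt hsupp hβ.le).ofReal hw).trans
    ?_
  rw [half_period_smul_eq hβ hκ.ne']
  simp only [← ofReal_sub, norm_real]
  linarith

theorem stmt_8_general (a : ℝ)
    (p : EuclideanSpace ℝ (Fin 3) → ℝ) (hint : Integrable p)
    (hsupp : Function.support p ⊆ Metric.closedBall 0 a) (η : ℝ) :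
    Filter.Tendsto
      (fun κ : ℝ => ⨆ β : Metric.sphere (0 : EuclideanSpace ℝ (Fin 3)) 1,
        ‖ptilde p (β : EuclideanSpace ℝ (Fin 3)) (κ + η * Complex.I)‖)
      Filter.atTop (nhds 0) := by
  refine tendsto_iSup_of_tendsto_prod_top (fun _ _ => norm_nonneg _) ?_
  have hπκ : Tendsto (fun κ : ℝ => π / κ) atTop (𝓝 0) :=
    tendsto_const_nhds.div_atTop tendsto_id
  have hscale : Tendsto (fun q : ℝ × S² => -(π / q.1)) (atTop ×ˢ ⊤) (𝓝 0) := by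
    simpa using (hπκ.comp tendsto_fst).neg
  have hshift :
      Tendsto (fun q : ℝ × S² => -(π / q.1) • (q.2 : ℝ³)) (atTop ×ˢ ⊤) (𝓝 0) :=
    hscale.zero_smul_isBoundedUnder_le
      ⟨1, eventually_map.2 (Eventually.of_forall fun q => (norm_eq_of_mem_sphere q.2).le)⟩
  have hbound : Tendsto (fun q : ℝ × S² => Real.exp (|η| * (a + π / q.1)) / 2 *
      ((∫ x, ‖p (x + -(π / q.1) • (q.2 : ℝ³)) - p x‖) +
        |1 - Real.exp (η * (π / q.1))| * ∫ x, ‖p x‖)) (atTop ×ˢ ⊤) (𝓝 0) := by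
    simpa using (((hπκ.const_add a).const_mul |η|).rexp.div_const 2).comp tendsto_fst |>.mul
      ((hint.tendsto_integral_norm_comp_add_sub.comp hshift).add
        (((((hπκ.const_mul η).rexp).const_sub 1).abs.comp tendsto_fst).mul_const _))
  refine squeeze_zero' (Eventually.of_forall fun _ => norm_nonneg _) ?_ hbound
  filter_upwards [(eventually_gt_atTop 0).prod_inl ⊤] with q hq
  exact norm_ptilde_le hint hsupp (norm_eq_of_mem_sphere q.2) hq η

theorem stmt_8 (a : ℝ) (ha : 0 < a)
    (p : EuclideanSpace ℝ (Fin 3) → ℝ) (hint : Integrable p)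
    (hsupp : Function.support p ⊆ Metric.closedBall 0 a) (η : ℝ) :
    Filter.Tendsto
      (fun κ : ℝ => ⨆ β : Metric.sphere (0 : EuclideanSpace ℝ (Fin 3)) 1,
        ‖ptilde p (β : EuclideanSpace ℝ (Fin 3)) (κ + η * Complex.I)‖)
      Filter.atTop (nhds 0) :=
  stmt_8_general a p hint hsupp η
end

section
/- Let a > 0, let ℓ ≥ 4 be a natural number, and fix a unit vector β ∈ S² ⊂ ℝ³. For κ > 1 set η(κ) := a⁻¹ ln κ and define J(κ) := ∫_{ℝ³} ds / ( | ‖s‖² − (κ + iη(κ)) (β·s) |_ℂ · ( 1 + η(κ)² + ‖κβ − s‖² )^{ℓ/2} ), where | · |_ℂ denotes the complex absolute value and β·s the Euclidean inner product. Then lim_{κ→+∞} κ · J(κ) = 0. -/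
/-!
Write `z = κ + iη` and `u = β·s`. The imaginary part `ηu` of `‖s‖² - zu` dominates where
`2κ|u| > ‖s‖²` and its real part does elsewhere, so `|‖s‖² - zu| ≥ η‖s‖² / (2κ)` as soon as
`η ≤ κ`. Splitting at `‖s‖ = κ/2` (inside, `‖κβ - s‖ ≥ κ/2`), the integrand is at most
`8/(ηκ) · (g₁(κβ - s) + g₂(s))` with `g₁ x = (1 + ‖x‖²)⁻²` and `g₂ x = (‖x‖²(1 + ‖x‖²))⁻¹`,
both integrable on `ℝ³`. Hence `κ J(κ) ≤ C / η(κ) = C a / ln κ → 0`.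
-/

open MeasureTheory Complex Filter

lemma mul_le_two_mul_norm_ofReal_sub_mul {r u κ η : ℝ} (hη : 0 ≤ η) (hηκ : η ≤ κ) :
    η * r ≤ 2 * κ * ‖(r : ℂ) - ((κ : ℂ) + η * I) * u‖ := by
  set z : ℂ := (r : ℂ) - ((κ : ℂ) + η * I) * u
  have hκ : 0 ≤ κ := hη.trans hηκ
  have hre : |r - κ * u| ≤ ‖z‖ := by simpa [z] using abs_re_le_norm z
  have him : η * |u| ≤ ‖z‖ := by simpa [z, abs_mul, abs_of_nonneg hη] using abs_im_le_norm z
  rcases le_or_gt (2 * κ * |u|) r with h | h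
  · have hr : 0 ≤ r := le_trans (by positivity) h
    have hκu : κ * u ≤ κ * |u| := mul_le_mul_of_nonneg_left (le_abs_self u) hκ
    have hrz : r ≤ 2 * ‖z‖ := by linarith [le_abs_self (r - κ * u)]
    nlinarith [mul_le_mul_of_nonneg_right hηκ hr]
  · nlinarith [abs_nonneg u]

lemma sq_mul_one_add_sq_le {E : Type*} [SeminormedAddCommGroup E] {v s : E}
    (hs : 2 * ‖s‖ ≤ ‖v‖) : ‖v‖ ^ 2 * (1 + ‖s‖ ^ 2) ≤ 4 * (1 + ‖v - s‖ ^ 2) ^ 2 := by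
  have hv : ‖v‖ ≤ 2 * ‖v - s‖ := by linarith [norm_sub_norm_le v s]
  have hs' : ‖s‖ ≤ ‖v - s‖ := by linarith
  calc ‖v‖ ^ 2 * (1 + ‖s‖ ^ 2) ≤ (2 * ‖v - s‖) ^ 2 * (1 + ‖v - s‖ ^ 2) := by gcongr
    _ ≤ 4 * (1 + ‖v - s‖ ^ 2) ^ 2 := by nlinarith [sq_nonneg ‖v - s‖]

lemma one_div_le_div_mul_inv {c g k x : ℝ} (hc : 0 < c) (hg : 0 < g) (hk : 0 < k)
    (h : c * g ≤ k * x) : 1 / x ≤ k / c * g⁻¹ := by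
  have hx : 0 < x := pos_of_mul_pos_right ((mul_pos hc hg).trans_le h) hk.le
  rw [← div_eq_mul_inv, div_div, div_le_div_iff₀ hx (by positivity)]
  linarith

lemma sq_le_rpow_of_one_le {x y p : ℝ} (hx : 1 ≤ x) (hxy : x ≤ y) (hp : 2 ≤ p) : x ^ 2 ≤ y ^ p := by
  calc x ^ 2 ≤ y ^ 2 := by gcongr
    _ = y ^ (2 : ℝ) := (Real.rpow_natCast y 2).symm
    _ ≤ y ^ p := Real.rpow_le_rpow_of_exponent_le (hx.trans hxy) hp

section Integrability

variable {E : Type*} [NormedAddCommGroup E] [NormedSpace ℝ E] [FiniteDimensional ℝ E]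
  [MeasurableSpace E] [BorelSpace E] (μ : Measure E) [μ.IsAddHaarMeasure]

lemma integrable_inv_one_add_norm_sq_sq (hE : Module.finrank ℝ E < 4) :
    Integrable (fun x : E ↦ ((1 + ‖x‖ ^ 2) ^ 2)⁻¹) μ := by
  refine (integrable_rpow_neg_one_add_norm_sq (μ := μ) (r := 4) (by exact_mod_cast hE)).congr
    (.of_forall fun x ↦ ?_)
  dsimp only
  rw [show -(4 : ℝ) / 2 = -(2 : ℕ) by norm_num, Real.rpow_neg (by positivity), Real.rpow_natCast]

lemma integrable_inv_sq_norm_mul_one_add_norm_sq (hE : Module.finrank ℝ E = 3) :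
    Integrable (fun x : E ↦ (‖x‖ ^ 2 * (1 + ‖x‖ ^ 2))⁻¹) μ := by
  have : Nontrivial E := Module.nontrivial_of_finrank_eq_succ hE
  rw [integrable_fun_norm_addHaar μ (f := fun r ↦ (r ^ 2 * (1 + r ^ 2))⁻¹), hE]
  refine integrable_inv_one_add_sq.integrableOn.congr_fun (fun r (hr : 0 < r) ↦ ?_)
    measurableSet_Ioi
  simp only [Nat.add_one_sub_one, smul_eq_mul]
  field_simp

end Integrability

section Integrand

variable {F : Type*} [NormedAddCommGroup F] [InnerProductSpace ℝ F]

noncomputable def integrand (β : F) (κ η p : ℝ) (s : F) : ℝ :=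
  1 / (‖((‖s‖ ^ 2 : ℝ) : ℂ) - ((κ : ℂ) + (η : ℂ) * I) * ((inner ℝ β s : ℝ) : ℂ)‖ *
    (1 + η ^ 2 + ‖κ • β - s‖ ^ 2) ^ p)

lemma integrand_nonneg (β : F) (κ η p : ℝ) (s : F) : 0 ≤ integrand β κ η p s := by
  unfold integrand; positivity

lemma integrand_le {β : F} (hβ : ‖β‖ = 1) {κ η p : ℝ} (hη : 0 < η) (hηκ : η ≤ κ) (hp : 2 ≤ p)
    (s : F) : integrand β κ η p s ≤
      8 / (η * κ) * (((1 + ‖κ • β - s‖ ^ 2) ^ 2)⁻¹ + (‖s‖ ^ 2 * (1 + ‖s‖ ^ 2))⁻¹) := by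
  have hκ : 0 < κ := hη.trans_le hηκ
  rcases eq_or_ne s 0 with rfl | hs
  · -- the denominator vanishes at `s = 0`, where `1 / 0 = 0`
    simp only [integrand, inner_zero_right, norm_zero]
    norm_num
    positivity
  have hv : ‖κ • β‖ = κ := by rw [norm_smul, hβ, mul_one, Real.norm_of_nonneg hκ.le]
  have hD := mul_le_two_mul_norm_ofReal_sub_mul (r := ‖s‖ ^ 2) (u := inner ℝ β s) hη.le hηκ
  have hW := sq_le_rpow_of_one_le (x := 1 + ‖κ • β - s‖ ^ 2) (y := 1 + η ^ 2 + ‖κ • β - s‖ ^ 2)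
    (by nlinarith [sq_nonneg ‖κ • β - s‖]) (by nlinarith [sq_nonneg η]) hp
  unfold integrand
  set D := ‖((‖s‖ ^ 2 : ℝ) : ℂ) - ((κ : ℂ) + (η : ℂ) * I) * ((inner ℝ β s : ℝ) : ℂ)‖
  set W := (1 + η ^ 2 + ‖κ • β - s‖ ^ 2) ^ p
  have hD₀ : 0 ≤ D := norm_nonneg _
  rcases le_or_gt (2 * ‖s‖) κ with hsmall | hlarge
  · have hgeom := sq_mul_one_add_sq_le (hv ▸ hsmall)
    rw [hv] at hgeom
    have hbound : η * κ * (‖s‖ ^ 2 * (1 + ‖s‖ ^ 2)) ≤ 8 * (D * W) := by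
      refine le_of_mul_le_mul_left ?_ hκ
      calc κ * (η * κ * (‖s‖ ^ 2 * (1 + ‖s‖ ^ 2)))
          = (η * ‖s‖ ^ 2) * (κ ^ 2 * (1 + ‖s‖ ^ 2)) := by ring
        _ ≤ (2 * κ * D) * (4 * W) :=
          mul_le_mul hD (by linarith) (by positivity) (by positivity)
        _ = κ * (8 * (D * W)) := by ring
    refine (one_div_le_div_mul_inv (by positivity) (by positivity) (by norm_num) hbound).trans ?_
    gcongr
    exact le_add_of_nonneg_left (by positivity)
  · have hD' : η * κ ≤ 8 * D := by
      refine le_of_mul_le_mul_left ?_ hκ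
      nlinarith [mul_le_mul_of_nonneg_left (pow_le_pow_left₀ hκ.le hlarge.le 2) hη.le]
    have hbound : η * κ * (1 + ‖κ • β - s‖ ^ 2) ^ 2 ≤ 8 * (D * W) := by
      calc η * κ * (1 + ‖κ • β - s‖ ^ 2) ^ 2 ≤ 8 * D * W := by gcongr
        _ = 8 * (D * W) := by ring
    refine (one_div_le_div_mul_inv (by positivity) (by positivity) (by norm_num) hbound).trans ?_
    gcongr
    exact le_add_of_nonneg_right (by positivity)

lemma integral_integrand_le [FiniteDimensional ℝ F] [MeasurableSpace F] [BorelSpace F]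
    (μ : Measure F) [μ.IsAddHaarMeasure] (hF : Module.finrank ℝ F = 3) {β : F} (hβ : ‖β‖ = 1) {κ η p : ℝ}
    (hη : 0 < η) (hηκ : η ≤ κ) (hp : 2 ≤ p) :
    ∫ s, integrand β κ η p s ∂μ ≤ 8 / (η * κ) *
      (∫ x, ((1 + ‖x‖ ^ 2) ^ 2)⁻¹ ∂μ + ∫ x, (‖x‖ ^ 2 * (1 + ‖x‖ ^ 2))⁻¹ ∂μ) := by
  have h₁ := (integrable_inv_one_add_norm_sq_sq μ (by omega)).comp_sub_left (κ • β)
  have h₂ := integrable_inv_sq_norm_mul_one_add_norm_sq μ hF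
  calc ∫ s, integrand β κ η p s ∂μ
      ≤ ∫ s, 8 / (η * κ) * (((1 + ‖κ • β - s‖ ^ 2) ^ 2)⁻¹ + (‖s‖ ^ 2 * (1 + ‖s‖ ^ 2))⁻¹) ∂μ :=
        integral_mono_of_nonneg (.of_forall (integrand_nonneg β κ η p)) ((h₁.add h₂).const_mul _)
          (.of_forall (integrand_le hβ hη hηκ hp))
    _ = _ := by
        rw [integral_const_mul, integral_add h₁ h₂,
          integral_sub_left_eq_self (fun x ↦ ((1 + ‖x‖ ^ 2) ^ 2)⁻¹) μ (κ • β)]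

end Integrand

theorem stmt_12 (a : ℝ) (ha : 0 < a) (ℓ : ℕ) (hℓ : 4 ≤ ℓ)
    (β : EuclideanSpace ℝ (Fin 3)) (hβ : ‖β‖ = 1) :
    Filter.Tendsto
      (fun κ : ℝ => κ *
        ∫ s : EuclideanSpace ℝ (Fin 3),
          1 / (‖((‖s‖ ^ 2 : ℝ) : ℂ) -
                  ((κ : ℂ) + (a⁻¹ * Real.log κ : ℝ) * Complex.I) * ((inner ℝ β s : ℝ) : ℂ)‖ *
               (1 + (a⁻¹ * Real.log κ) ^ 2 + ‖κ • β - s‖ ^ 2) ^ ((ℓ : ℝ) / 2)))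
      Filter.atTop (nhds 0) := by
  change Tendsto (fun κ ↦ κ * ∫ s, integrand β κ (a⁻¹ * Real.log κ) (ℓ / 2) s) atTop (nhds 0)
  set C := (∫ x : EuclideanSpace ℝ (Fin 3), ((1 + ‖x‖ ^ 2) ^ 2)⁻¹) +
    ∫ x : EuclideanSpace ℝ (Fin 3), (‖x‖ ^ 2 * (1 + ‖x‖ ^ 2))⁻¹
  have hp : (2 : ℝ) ≤ ℓ / 2 := by
    rw [le_div_iff₀ two_pos]; exact_mod_cast (show 2 * 2 ≤ ℓ by omega)
  refine squeeze_zero' (g := fun κ ↦ 8 * a * C / Real.log κ) ?_ ?_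
    (tendsto_const_nhds.div_atTop Real.tendsto_log_atTop)
  · filter_upwards [eventually_ge_atTop 0] with κ hκ
    exact mul_nonneg hκ (integral_nonneg (integrand_nonneg _ _ _ _))
  filter_upwards [eventually_gt_atTop 1, Real.isLittleO_log_id_atTop.bound ha] with κ hκ hlog
  have hlogκ : 0 < Real.log κ := Real.log_pos hκ
  have hη : 0 < a⁻¹ * Real.log κ := by positivity
  have hηκ : a⁻¹ * Real.log κ ≤ κ := by
    rw [inv_mul_le_iff₀ ha]
    simpa [abs_of_pos hlogκ, abs_of_pos (zero_lt_one.trans hκ)] using hlog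
  calc κ * ∫ s, integrand β κ (a⁻¹ * Real.log κ) (ℓ / 2) s
      ≤ κ * (8 / (a⁻¹ * Real.log κ * κ) * C) := by
        gcongr
        exact integral_integrand_le volume finrank_euclideanSpace_fin hβ hη hηκ hp
    _ = 8 * a * C / Real.log κ := by field_simp
end
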